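/- arXiv:2605.18717 — 2 statements merged into one kernel-verified Lean document; each statement's English description precedes it below -/
import Mathlib

section
/- Let p be a prime, and let J, W, Z ∈ L¹(ℤ_p) with ‖J‖₁ ∈ (0,1), and let φ : ℂ → ℂ be Lipschitz with constant L_φ such that ‖J‖₁ + L_φ‖W‖₁ < 1. Then the map T defined by (Tf)(x) = (J * f)(x) − ∫_{ℤ_p} W(x−y) φ(f(y)) dy − Z(x) has a unique fixed point in L¹(ℤ_p). -/
/-!
The Haar measure of `ℤ_p` is translation invariant, so Fubini gives Young's inequality
`‖K * f‖₁ ≤ ‖K‖₁ ‖f‖₁`. Since `T f - T g = J * (f - g) - W * (φ ∘ f - φ ∘ g)` and `φ` is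
`L_φ`-Lipschitz, `T` is a contraction of `L¹` with constant `‖J‖₁ + L_φ ‖W‖₁ < 1`, and Banach's
fixed point theorem applies.
-/

open MeasureTheory

noncomputable instance (p : ℕ) [Fact p.Prime] : MeasurableSpace ℤ_[p] := borel _
instance (p : ℕ) [Fact p.Prime] : BorelSpace ℤ_[p] := ⟨rfl⟩

/-- The normalized Haar measure on the compact additive group ℤ_p (total mass 1). -/
noncomputable def haarZp (p : ℕ) [Fact p.Prime] : Measure ℤ_[p] :=
  Measure.addHaarMeasure ⟨⟨Set.univ, isCompact_univ⟩, by simp⟩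

/-- The operator (Tf)(x) = (J*f)(x) - ∫ W(x-y) φ(f(y)) dy - Z(x). -/
noncomputable def Tmap (p : ℕ) [Fact p.Prime] (J W Z : ℤ_[p] → ℂ) (φ : ℂ → ℂ)
    (f : ℤ_[p] → ℂ) (x : ℤ_[p]) : ℂ :=
  (∫ y, J (x - y) * f y ∂(haarZp p)) - (∫ y, W (x - y) * φ (f y) ∂(haarZp p)) - Z x

open scoped ENNReal NNReal

section FixedPoint

variable {α E : Type*} [MeasurableSpace α] {μ : Measure α} [NormedAddCommGroup E]
  {p : ℝ≥0∞} {T : (α → E) → α → E} {K : ℝ≥0}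

theorem apply_ae_eq_apply_of_eLpNorm_sub_le (hp : p ≠ 0)
    (hT : ∀ f, MemLp f p μ → MemLp (T f) p μ)
    (hTK : ∀ f g, MemLp f p μ → MemLp g p μ → eLpNorm (T f - T g) p μ ≤ K * eLpNorm (f - g) p μ)
    {f g : α → E} (hf : MemLp f p μ) (hg : MemLp g p μ) (hfg : f =ᵐ[μ] g) :
    T f =ᵐ[μ] T g := by
  have h0 : eLpNorm (f - g) p μ = 0 := by
    rw [eLpNorm_congr_ae (Filter.eventuallyEq_iff_sub.mp hfg), eLpNorm_zero]
  have hT0 : eLpNorm (T f - T g) p μ = 0 := by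
    simpa [h0] using hTK f g hf hg
  rw [eLpNorm_eq_zero_iff ((hT f hf).1.sub (hT g hg).1) hp] at hT0
  exact Filter.eventuallyEq_iff_sub.mpr hT0

theorem exists_unique_ae_fixedPoint_of_eLpNorm_sub_le [CompleteSpace E] [Fact (1 ≤ p)]
    (hK : K < 1) (hT : ∀ f, MemLp f p μ → MemLp (T f) p μ)
    (hTK : ∀ f g, MemLp f p μ → MemLp g p μ → eLpNorm (T f - T g) p μ ≤ K * eLpNorm (f - g) p μ) :
    ∃ f, (MemLp f p μ ∧ f =ᵐ[μ] T f) ∧ ∀ g, MemLp g p μ → g =ᵐ[μ] T g → g =ᵐ[μ] f := by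
  let Φ : Lp E p μ → Lp E p μ := fun u => (hT u (Lp.memLp u)).toLp (T u)
  have hΦ : ContractingWith K Φ := ⟨hK, fun u v => by
    rw [Lp.edist_toLp_toLp, Lp.edist_def]
    exact hTK u v (Lp.memLp u) (Lp.memLp v)⟩
  let u := hΦ.fixedPoint Φ
  have hu : Φ u = u := hΦ.fixedPoint_isFixedPt
  refine ⟨u, ⟨Lp.memLp u, ?_⟩, fun g hg hgT => ?_⟩
  · conv_lhs => rw [← hu]
    exact MemLp.coeFn_toLp _
  · have hp : p ≠ 0 := (zero_lt_one.trans_le Fact.out).ne'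
    have hgu : hg.toLp g = u := hΦ.fixedPoint_unique <| by
      refine (MemLp.toLp_eq_toLp_iff _ _).mpr ?_
      exact (apply_ae_eq_apply_of_eLpNorm_sub_le hp hT hTK (Lp.memLp _) hg hg.coeFn_toLp).trans
        hgT.symm
    rw [← hgu]
    exact hg.coeFn_toLp.symm

end FixedPoint

namespace MeasureTheory

variable {G 𝕜 : Type*} [AddGroup G] [MeasurableSpace G] [MeasurableAdd₂ G] [MeasurableNeg G]
  {μ : Measure G} [SFinite μ] [μ.IsAddRightInvariant] [RCLike 𝕜] {K f g : G → 𝕜}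

theorem Integrable.integrable_integral_mul_sub (hK : Integrable K μ) (hf : Integrable f μ) :
    Integrable (fun x => ∫ y, K (x - y) * f y ∂μ) μ :=
  hf.integrable_convolution (ContinuousLinearMap.mul 𝕜 𝕜).flip hK

theorem Integrable.ae_integrable_mul_sub (hK : Integrable K μ) (hf : Integrable f μ) :
    ∀ᵐ x ∂μ, Integrable (fun y => K (x - y) * f y) μ :=
  hf.ae_convolution_exists (ContinuousLinearMap.mul 𝕜 𝕜).flip hK

theorem Integrable.integral_mul_sub_sub_ae_eq (hK : Integrable K μ) (hf : Integrable f μ)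
    (hg : Integrable g μ) :
    (fun x => ∫ y, K (x - y) * f y ∂μ) - (fun x => ∫ y, K (x - y) * g y ∂μ)
      =ᵐ[μ] fun x => ∫ y, K (x - y) * (f - g) y ∂μ := by
  filter_upwards [hK.ae_integrable_mul_sub hf, hK.ae_integrable_mul_sub hg] with x hfx hgx
  simp only [Pi.sub_apply, mul_sub]
  exact (integral_sub hfx hgx).symm

theorem eLpNorm_one_integral_mul_sub_le (hK : AEStronglyMeasurable K μ)
    (hf : AEStronglyMeasurable f μ) :
    eLpNorm (fun x => ∫ y, K (x - y) * f y ∂μ) 1 μ ≤ eLpNorm K 1 μ * eLpNorm f 1 μ := by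
  have hKshift : ∀ y, AEMeasurable (fun x => ‖K (x - y)‖ₑ) μ := fun y =>
    hK.enorm.comp_quasiMeasurePreserving (measurePreserving_sub_right μ y).quasiMeasurePreserving
  have hprod : AEMeasurable (fun z : G × G => ‖K (z.1 - z.2)‖ₑ * ‖f z.2‖ₑ) (μ.prod μ) :=
    (hK.enorm.comp_quasiMeasurePreserving
      (quasiMeasurePreserving_sub_of_right_invariant μ μ)).mul hf.enorm.comp_snd
  simp only [eLpNorm_one_eq_lintegral_enorm]
  calc ∫⁻ x, ‖∫ y, K (x - y) * f y ∂μ‖ₑ ∂μ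
      ≤ ∫⁻ x, ∫⁻ y, ‖K (x - y)‖ₑ * ‖f y‖ₑ ∂μ ∂μ := lintegral_mono fun x =>
        (enorm_integral_le_lintegral_enorm _).trans_eq (by simp only [enorm_mul])
    _ = ∫⁻ y, ∫⁻ x, ‖K (x - y)‖ₑ * ‖f y‖ₑ ∂μ ∂μ := lintegral_lintegral_swap hprod
    _ = ∫⁻ y, (∫⁻ x, ‖K x‖ₑ ∂μ) * ‖f y‖ₑ ∂μ := by
        refine lintegral_congr fun y => ?_
        rw [lintegral_mul_const'' _ (hKshift y), lintegral_sub_right_eq_self (‖K ·‖ₑ) y]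
    _ = (∫⁻ x, ‖K x‖ₑ ∂μ) * ∫⁻ y, ‖f y‖ₑ ∂μ := lintegral_const_mul'' _ hf.enorm

end MeasureTheory

section Lipschitz

variable {α E F : Type*} [MeasurableSpace α] {μ : Measure α} [NormedAddCommGroup E]
  [NormedAddCommGroup F] {p : ℝ≥0∞} {φ : E → F} {L : ℝ≥0}

theorem LipschitzWith.comp_memLp_of_isFiniteMeasure [IsFiniteMeasure μ] (hφ : LipschitzWith L φ)
    {f : α → E} (hf : MemLp f p μ) : MemLp (φ ∘ f) p μ := by
  have hshift := (hφ.sub (LipschitzWith.const (φ 0))).comp_memLp (sub_self _) hf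
  convert hshift.add (memLp_const (φ 0)) using 1
  ext x
  simp

theorem LipschitzWith.integrable_comp_of_isFiniteMeasure [IsFiniteMeasure μ]
    (hφ : LipschitzWith L φ) {f : α → E} (hf : Integrable f μ) : Integrable (φ ∘ f) μ :=
  memLp_one_iff_integrable.mp (hφ.comp_memLp_of_isFiniteMeasure (memLp_one_iff_integrable.mpr hf))

theorem LipschitzWith.eLpNorm_comp_sub_comp_le (hφ : LipschitzWith L φ) (f g : α → E) :
    eLpNorm (φ ∘ f - φ ∘ g) p μ ≤ L * eLpNorm (f - g) p μ :=
  eLpNorm_le_nnreal_smul_eLpNorm_of_ae_le_mul'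
    (Filter.Eventually.of_forall fun x => by
      simpa only [Pi.sub_apply, Function.comp_apply, ← edist_eq_enorm_sub]
        using hφ (f x) (g x)) p

end Lipschitz

section Tmap

variable {p : ℕ} [Fact p.Prime] {J W Z : ℤ_[p] → ℂ} {φ : ℂ → ℂ} {L : ℝ≥0} {f g : ℤ_[p] → ℂ}

local notation "μₚ" => haarZp p

instance : (haarZp p).IsAddHaarMeasure := Measure.isAddHaarMeasure_addHaarMeasure _

theorem integrable_Tmap (hJ : Integrable J μₚ) (hW : Integrable W μₚ) (hZ : Integrable Z μₚ)
    (hφ : LipschitzWith L φ) (hf : Integrable f μₚ) :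
    Integrable (Tmap p J W Z φ f) μₚ :=
  ((hJ.integrable_integral_mul_sub hf).sub
    (hW.integrable_integral_mul_sub (hφ.integrable_comp_of_isFiniteMeasure hf))).sub hZ

theorem Tmap_sub_Tmap_ae_eq (hJ : Integrable J μₚ) (hW : Integrable W μₚ)
    (hφ : LipschitzWith L φ) (hf : Integrable f μₚ) (hg : Integrable g μₚ) :
    Tmap p J W Z φ f - Tmap p J W Z φ g =ᵐ[μₚ]
      (fun x => ∫ y, J (x - y) * (f - g) y ∂μₚ) - fun x => ∫ y, W (x - y) * (φ ∘ f - φ ∘ g) y ∂μₚ := by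
  filter_upwards [hJ.integral_mul_sub_sub_ae_eq hf hg,
    hW.integral_mul_sub_sub_ae_eq (hφ.integrable_comp_of_isFiniteMeasure hf)
      (hφ.integrable_comp_of_isFiniteMeasure hg)] with x hJx hWx
  simp only [Pi.sub_apply, Function.comp_apply, Tmap] at hJx hWx ⊢
  rw [← hJx, ← hWx]
  ring

theorem eLpNorm_Tmap_sub_Tmap_le (hJ : Integrable J μₚ) (hW : Integrable W μₚ)
    (hφ : LipschitzWith L φ) (hf : Integrable f μₚ) (hg : Integrable g μₚ) :
    eLpNorm (Tmap p J W Z φ f - Tmap p J W Z φ g) 1 μₚ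
      ≤ (eLpNorm J 1 μₚ + L * eLpNorm W 1 μₚ) * eLpNorm (f - g) 1 μₚ := by
  have hφfg := (hφ.integrable_comp_of_isFiniteMeasure hf).sub
    (hφ.integrable_comp_of_isFiniteMeasure hg)
  calc eLpNorm (Tmap p J W Z φ f - Tmap p J W Z φ g) 1 μₚ
      = eLpNorm ((fun x => ∫ y, J (x - y) * (f - g) y ∂μₚ)
          - fun x => ∫ y, W (x - y) * (φ ∘ f - φ ∘ g) y ∂μₚ) 1 μₚ :=
        eLpNorm_congr_ae (Tmap_sub_Tmap_ae_eq hJ hW hφ hf hg)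
    _ ≤ eLpNorm (fun x => ∫ y, J (x - y) * (f - g) y ∂μₚ) 1 μₚ
          + eLpNorm (fun x => ∫ y, W (x - y) * (φ ∘ f - φ ∘ g) y ∂μₚ) 1 μₚ :=
        eLpNorm_sub_le (hJ.integrable_integral_mul_sub (hf.sub hg)).1
          (hW.integrable_integral_mul_sub hφfg).1 le_rfl
    _ ≤ eLpNorm J 1 μₚ * eLpNorm (f - g) 1 μₚ
          + eLpNorm W 1 μₚ * (L * eLpNorm (f - g) 1 μₚ) := by
        gcongr
        · exact eLpNorm_one_integral_mul_sub_le hJ.1 (hf.sub hg).1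
        · exact (eLpNorm_one_integral_mul_sub_le hW.1 hφfg.1).trans
            (by gcongr; exact hφ.eLpNorm_comp_sub_comp_le f g)
    _ = _ := by ring

end Tmap

theorem stmt0_general (p : ℕ) [Fact p.Prime] (J W Z : ℤ_[p] → ℂ)
    (hJ : Integrable J (haarZp p)) (hW : Integrable W (haarZp p))
    (hZ : Integrable Z (haarZp p))
    (Lφ : NNReal) (φ : ℂ → ℂ) (hφ : LipschitzWith Lφ φ)
    (hcontr : (∫ x, ‖J x‖ ∂(haarZp p)) + (Lφ : ℝ) * ∫ x, ‖W x‖ ∂(haarZp p) < 1) :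
    ∃ f : ℤ_[p] → ℂ, (Integrable f (haarZp p) ∧ f =ᵐ[haarZp p] Tmap p J W Z φ f) ∧
      ∀ g : ℤ_[p] → ℂ, Integrable g (haarZp p) → g =ᵐ[haarZp p] Tmap p J W Z φ g →
        g =ᵐ[haarZp p] f := by
  set K : ℝ≥0 := ((∫ x, ‖J x‖ ∂(haarZp p)) + (Lφ : ℝ) * ∫ x, ‖W x‖ ∂(haarZp p)).toNNReal
  have hK : (K : ℝ≥0∞) = eLpNorm J 1 (haarZp p) + Lφ * eLpNorm W 1 (haarZp p) := by
    rw [ENNReal.ofNNReal_toNNReal, ENNReal.ofReal_add (by positivity) (by positivity),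
      ENNReal.ofReal_mul Lφ.coe_nonneg, ofReal_integral_norm_eq_lintegral_enorm hJ,
      ofReal_integral_norm_eq_lintegral_enorm hW, ENNReal.ofReal_coe_nnreal,
      eLpNorm_one_eq_lintegral_enorm, eLpNorm_one_eq_lintegral_enorm]
  simp only [← memLp_one_iff_integrable]
  refine exists_unique_ae_fixedPoint_of_eLpNorm_sub_le (Real.toNNReal_lt_one.mpr hcontr)
    (fun f hf => ?_) fun f g hf hg => ?_
  · rw [memLp_one_iff_integrable] at hf ⊢
    exact integrable_Tmap hJ hW hZ hφ hf
  · rw [memLp_one_iff_integrable] at hf hg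
    exact hK ▸ eLpNorm_Tmap_sub_Tmap_le hJ hW hφ hf hg

theorem stmt0 (p : ℕ) [Fact p.Prime] (J W Z : ℤ_[p] → ℂ)
    (hJ : Integrable J (haarZp p)) (hW : Integrable W (haarZp p))
    (hZ : Integrable Z (haarZp p))
    (Lφ : NNReal) (φ : ℂ → ℂ) (hφ : LipschitzWith Lφ φ)
    (hJpos : 0 < ∫ x, ‖J x‖ ∂(haarZp p))
    (hcontr : (∫ x, ‖J x‖ ∂(haarZp p)) + (Lφ : ℝ) * ∫ x, ‖W x‖ ∂(haarZp p) < 1) :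
    ∃ f : ℤ_[p] → ℂ, (Integrable f (haarZp p) ∧ f =ᵐ[haarZp p] Tmap p J W Z φ f) ∧
      ∀ g : ℤ_[p] → ℂ, Integrable g (haarZp p) → g =ᵐ[haarZp p] Tmap p J W Z φ g →
        g =ᵐ[haarZp p] f :=
  stmt0_general p J W Z hJ hW hZ Lφ φ hφ hcontr
end

section
/- Let p be a prime, M ≥ 1 an integer, and F : [0,1] → ℂ continuous, viewed as a radial function on ℤ_p. Then F(|·|_p) * Ω(p^{M+1}|·|_p) = (∫_{p^{M+1}ℤ_p} F(|y|_p) dy) · Ω(p^{M+1}|x|_p) + p^{-M-1} Σ_{j=0}^{M} F(p^{-j}) 1_{S_{-j}}(x), where Ω(p^{M+1}|x|_p) is the indicator of the ball {|x|_p ≤ p^{-M-1}} and 1_{S_{-j}} is the indicator of the sphere {|x|_p = p^{-j}}. -/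
/-!
The ball `B = p^{M+1}ℤ_p` is an open subgroup of index `p^{M+1}`, so it has Haar measure
`p^{-M-1}`. If `x ∈ B`, then `y ↦ x - y` maps `B` onto itself and translation invariance turns
the convolution into `∫_B F(|y|_p) dy`. If `x ∉ B`, then `|y|_p < |x|_p` for every `y ∈ B`, so by
the ultrametric inequality `|x - y|_p = |x|_p`: the integrand is the constant `F(|x|_p)`, and
`|x|_p = p^{-j}` for exactly one `j ≤ M`.
-/

open MeasureTheory
open scoped ENNReal

/-- The radial function `x ↦ F(|x|_p)` on ℤ_p associated to `F : [0,1] → ℂ`. -/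
noncomputable def radial (p : ℕ) [Fact p.Prime] (F : Set.Icc (0:ℝ) 1 → ℂ)
    (x : ℤ_[p]) : ℂ :=
  F ⟨‖x‖, ⟨norm_nonneg x, PadicInt.norm_le_one x⟩⟩

lemma pow_mem_Icc (p : ℕ) [Fact p.Prime] (j : ℕ) :
    ((p:ℝ))^(-(j:ℤ)) ∈ Set.Icc (0:ℝ) 1 := by
  have hp : (1:ℝ) ≤ p := by exact_mod_cast (Fact.out : p.Prime).one_le
  exact ⟨by positivity, zpow_le_one_of_nonpos₀ hp (by simp)⟩

/-- The value F(p^{-j}). -/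
noncomputable def Fval (p : ℕ) [Fact p.Prime] (F : Set.Icc (0:ℝ) 1 → ℂ) (j : ℕ) : ℂ :=
  F ⟨(p:ℝ)^(-(j:ℤ)), pow_mem_Icc p j⟩

/-- The sphere of radius p^{-j} centered at the origin in ℤ_p. -/
def sphereZp (p : ℕ) [Fact p.Prime] (j : ℕ) : Set ℤ_[p] :=
  {x : ℤ_[p] | ‖x‖ = (p:ℝ)^(-(j:ℤ))}

/-- The ball {x : |x|_p ≤ p^{-m}} in ℤ_p. -/
def ballZp (p : ℕ) [Fact p.Prime] (m : ℕ) : Set ℤ_[p] :=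
  {x : ℤ_[p] | ‖x‖ ≤ (p:ℝ)^(-(m:ℤ))}

theorem integral_mul_indicator_one {G 𝕜 : Type*} [MeasurableSpace G] [RCLike 𝕜] (μ : Measure G)
    {s : Set G} (hs : MeasurableSet s) (f : G → 𝕜) :
    ∫ y, f y * s.indicator (fun _ => (1 : 𝕜)) y ∂μ = ∫ y in s, f y ∂μ := by
  simp_rw [← Set.indicator_mul_right, mul_one]
  exact integral_indicator hs

theorem AddSubgroup.setIntegral_sub_left_eq_self {G E : Type*} [MeasurableSpace G] [AddGroup G]
    [MeasurableAdd G] [MeasurableNeg G] [NormedAddCommGroup E] [NormedSpace ℝ E]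
    (μ : Measure G) [μ.IsNegInvariant] [μ.IsAddLeftInvariant] (H : AddSubgroup G)
    (hH : MeasurableSet (H : Set G)) (f : G → E) {x : G} (hx : x ∈ H) :
    ∫ y in H, f (x - y) ∂μ = ∫ y in H, f y ∂μ := by
  have hmem : ∀ y, x - y ∈ H ↔ y ∈ H := fun y => by
    rw [sub_eq_add_neg, H.add_mem_cancel_left hx, H.neg_mem_iff]
  have hind : (H : Set G).indicator (fun y => f (x - y)) =
      fun y => (H : Set G).indicator f (x - y) := by
    ext y
    by_cases hy : y ∈ H
    · simp [hy, (hmem y).2 hy]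
    · simp [hy, mt (hmem y).1 hy]
  rw [← integral_indicator hH, ← integral_indicator hH, hind, integral_sub_left_eq_self]

theorem IsUltrametricDist.norm_sub_eq_left_of_norm_lt {S : Type*} [SeminormedAddCommGroup S]
    [IsUltrametricDist S] {x y : S} (h : ‖y‖ < ‖x‖) : ‖x - y‖ = ‖x‖ := by
  rw [sub_eq_add_neg, norm_add_eq_max_of_norm_ne_norm (by rw [norm_neg]; exact h.ne'), norm_neg,
    max_eq_left h.le]

namespace PadicInt

variable {p : ℕ} [Fact p.Prime]

theorem index_span_pow (n : ℕ) :
    (Ideal.span {(p : ℤ_[p]) ^ n}).toAddSubgroup.index = p ^ n := by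
  rw [AddSubgroup.index_eq_card, ← ker_toZModPow]
  exact (Nat.card_congr
    (RingHom.quotientKerEquivOfSurjective (ZMod.ringHom_surjective (toZModPow n))).toEquiv).trans
    (Nat.card_zmod _)

end PadicInt

section Zp

variable {p : ℕ} [Fact p.Prime]

instance inst_s10 : (haarZp p).IsAddHaarMeasure := by
  unfold haarZp; infer_instance

instance : (haarZp p).IsNegInvariant := by
  unfold haarZp; infer_instance

theorem haarZp_univ : haarZp p Set.univ = 1 :=
  Measure.addHaarMeasure_self

theorem coe_span_pow_eq_ballZp (m : ℕ) :
    ((Ideal.span {(p : ℤ_[p]) ^ m}).toAddSubgroup : Set ℤ_[p]) = ballZp p m :=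
  Set.ext fun x => (PadicInt.norm_le_pow_iff_mem_span_pow x m).symm

theorem measurableSet_ballZp (m : ℕ) : MeasurableSet (ballZp p m) :=
  (isClosed_le continuous_norm continuous_const).measurableSet

theorem measureReal_ballZp (m : ℕ) : (haarZp p).real (ballZp p m) = (p : ℝ) ^ (-(m : ℤ)) := by
  set H := (Ideal.span {(p : ℤ_[p]) ^ m}).toAddSubgroup
  have hindex : H.index = p ^ m := PadicInt.index_span_pow m
  have : H.FiniteIndex := ⟨by rw [hindex]; exact pow_ne_zero _ (Fact.out : p.Prime).ne_zero⟩
  have h := H.index_mul_measure (by rw [coe_span_pow_eq_ballZp]; exact measurableSet_ballZp m)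
    (haarZp p)
  rw [coe_span_pow_eq_ballZp, haarZp_univ, hindex] at h
  have hμ : haarZp p (ballZp p m) = ((p : ℝ≥0∞) ^ m)⁻¹ :=
    ENNReal.eq_inv_of_mul_eq_one_left (by rw [mul_comm]; exact_mod_cast h)
  rw [measureReal_def, hμ]
  simp [zpow_neg]

theorem mem_ballZp_iff {m : ℕ} {x : ℤ_[p]} : x ∈ ballZp p m ↔ x = 0 ∨ m ≤ x.valuation := by
  show ‖x‖ ≤ _ ↔ _
  rcases eq_or_ne x 0 with rfl | hx
  · simp only [norm_zero, true_or, iff_true]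
    positivity
  · rw [PadicInt.norm_le_pow_iff_le_valuation x hx]
    simp [hx]

theorem mem_sphereZp_iff {j : ℕ} {x : ℤ_[p]} : x ∈ sphereZp p j ↔ x ≠ 0 ∧ x.valuation = j := by
  have hp : (1 : ℝ) < p := by exact_mod_cast (Fact.out : p.Prime).one_lt
  show ‖x‖ = _ ↔ _
  rcases eq_or_ne x 0 with rfl | hx
  · simp only [norm_zero, ne_eq, not_true_eq_false, false_and, iff_false]
    exact (zpow_pos (zero_lt_one.trans hp) _).ne
  · rw [PadicInt.norm_eq_zpow_neg_valuation hx,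
      (zpow_right_injective₀ (zero_lt_one.trans hp) hp.ne').eq_iff, neg_inj, Nat.cast_inj]
    simp [hx]

theorem radial_of_mem_sphereZp (F : Set.Icc (0:ℝ) 1 → ℂ) {j : ℕ} {x : ℤ_[p]}
    (hx : x ∈ sphereZp p j) : radial p F x = Fval p F j :=
  congrArg F (Subtype.ext hx)

theorem radial_sub_of_norm_lt (F : Set.Icc (0:ℝ) 1 → ℂ) {x y : ℤ_[p]} (h : ‖y‖ < ‖x‖) :
    radial p F (x - y) = radial p F x :=
  congrArg F (Subtype.ext (IsUltrametricDist.norm_sub_eq_left_of_norm_lt h))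

theorem sum_Fval_mul_indicator_sphereZp (F : Set.Icc (0:ℝ) 1 → ℂ) (M : ℕ) (x : ℤ_[p]) :
    ∑ j ∈ Finset.range (M + 1), Fval p F j * (sphereZp p j).indicator (fun _ => (1 : ℂ)) x =
      (ballZp p (M + 1))ᶜ.indicator (radial p F) x := by
  by_cases hx : x ∈ ballZp p (M + 1)
  · rw [Set.indicator_of_notMem (Set.notMem_compl_iff.2 hx)]
    refine Finset.sum_eq_zero fun j hj => ?_
    rw [Set.indicator_of_notMem, mul_zero]
    intro hsph
    obtain ⟨hx0, rfl⟩ := mem_sphereZp_iff.1 hsph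
    rcases mem_ballZp_iff.1 hx with hx | hle
    · exact hx0 hx
    · exact absurd (Finset.mem_range.1 hj) (not_lt.2 hle)
  · obtain ⟨hx0, hlt⟩ : x ≠ 0 ∧ x.valuation < M + 1 := by
      simpa [mem_ballZp_iff] using hx
    have hsph : x ∈ sphereZp p x.valuation := mem_sphereZp_iff.2 ⟨hx0, rfl⟩
    rw [Set.indicator_of_mem hx, Finset.sum_eq_single_of_mem _ (Finset.mem_range.2 hlt),
      Set.indicator_of_mem hsph, mul_one, radial_of_mem_sphereZp F hsph]
    intro j _ hj
    rw [Set.indicator_of_notMem (fun h => hj (mem_sphereZp_iff.1 h).2.symm), mul_zero]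

theorem setIntegral_ballZp_sub_left {E : Type*} [NormedAddCommGroup E] [NormedSpace ℝ E]
    (f : ℤ_[p] → E) {m : ℕ} {x : ℤ_[p]} (hx : x ∈ ballZp p m) :
    ∫ y in ballZp p m, f (x - y) ∂haarZp p = ∫ y in ballZp p m, f y ∂haarZp p := by
  have hH := coe_span_pow_eq_ballZp (p := p) m
  rw [← hH] at hx ⊢
  exact AddSubgroup.setIntegral_sub_left_eq_self _ _ (hH ▸ measurableSet_ballZp m) f hx

theorem setIntegral_ballZp_radial_sub_of_notMem (F : Set.Icc (0:ℝ) 1 → ℂ) {m : ℕ} {x : ℤ_[p]}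
    (hx : x ∉ ballZp p m) :
    ∫ y in ballZp p m, radial p F (x - y) ∂haarZp p = (p : ℂ) ^ (-(m : ℤ)) * radial p F x := by
  have hconst : Set.EqOn (fun y => radial p F (x - y)) (fun _ => radial p F x) (ballZp p m) :=
    fun y hy => radial_sub_of_norm_lt F (lt_of_le_of_lt hy (not_le.1 hx))
  rw [setIntegral_congr_fun (measurableSet_ballZp m) hconst, setIntegral_const,
    measureReal_ballZp, Complex.real_smul]
  push_cast
  rfl

end Zp

theorem stmt10_general (p : ℕ) [Fact p.Prime] (M : ℕ)
    (F : Set.Icc (0:ℝ) 1 → ℂ) (x : ℤ_[p]) :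
    (∫ y, radial p F (x - y) * Set.indicator (ballZp p (M+1)) (fun _ => (1:ℂ)) y
        ∂(haarZp p)) =
      (∫ y in ballZp p (M+1), radial p F y ∂(haarZp p)) *
          Set.indicator (ballZp p (M+1)) (fun _ => (1:ℂ)) x +
        (p:ℂ)^(-((M:ℤ)+1)) * ∑ j ∈ Finset.range (M+1),
          Fval p F j * Set.indicator (sphereZp p j) (fun _ => (1:ℂ)) x := by
  rw [integral_mul_indicator_one _ (measurableSet_ballZp _), sum_Fval_mul_indicator_sphereZp]
  by_cases hx : x ∈ ballZp p (M + 1)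
  · simp [setIntegral_ballZp_sub_left _ hx, hx]
  · rw [setIntegral_ballZp_radial_sub_of_notMem F hx, Set.indicator_of_notMem hx,
      Set.indicator_of_mem hx]
    push_cast
    ring

theorem stmt10 (p : ℕ) [Fact p.Prime] (M : ℕ) (hM : 1 ≤ M)
    (F : Set.Icc (0:ℝ) 1 → ℂ) (hF : Continuous F) (x : ℤ_[p]) :
    (∫ y, radial p F (x - y) * Set.indicator (ballZp p (M+1)) (fun _ => (1:ℂ)) y
        ∂(haarZp p)) =
      (∫ y in ballZp p (M+1), radial p F y ∂(haarZp p)) *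
          Set.indicator (ballZp p (M+1)) (fun _ => (1:ℂ)) x +
        (p:ℂ)^(-((M:ℤ)+1)) * ∑ j ∈ Finset.range (M+1),
          Fval p F j * Set.indicator (sphereZp p j) (fun _ => (1:ℂ)) x :=
  stmt10_general p M F x
end
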